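/- Let λ > 0, φ, ψ ∈ (0, π). Then the Meixner–Pollaczek polynomials satisfy the connection relation P_n^{(λ)}(x; φ) = (1/sinⁿψ) Σ_{k=0}^n [(2λ+k)_{n−k}/(n−k)!] sin^k φ · sin^{n−k}(ψ−φ) · P_k^{(λ)}(x; ψ), for all x ∈ ℝ and n ∈ ℕ₀. -/
import Mathlib
open Complex Finset

/-- The Pochhammer symbol (rising factorial) `(z)_n = z(z+1)⋯(z+n-1)`. -/
noncomputable def poch (z : ℂ) (n : ℕ) : ℂ := ∏ i ∈ Finset.range n, (z + i)

lemma poch_succ (z : ℂ) (n : ℕ) : poch z (n+1) = poch z n * (z + n) := by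
  simp [poch, Finset.prod_range_succ]

lemma poch_neg_zero {m j : ℕ} (h : m < j) : poch (-(m:ℂ)) j = 0 := by
  apply Finset.prod_eq_zero (Finset.mem_range.mpr h); simp

lemma poch_neg_mul {m : ℕ} : ∀ {j : ℕ}, j ≤ m →
    poch (-(m:ℂ)) j * ((m - j).factorial : ℂ) = (-1)^j * (m.factorial : ℂ) := by
  intro j
  induction j with
  | zero => simp [poch]
  | succ j ih =>
    intro h
    have hj : j ≤ m := by omega
    have ihj := ih hj
    rw [poch_succ]
    have h1 : ((m:ℂ) - j) = ((m - j : ℕ) : ℂ) := by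
      push_cast [Nat.cast_sub hj]; ring
    have h2 : ((m - j).factorial : ℂ) = ((m-j : ℕ) : ℂ) * ((m - (j+1)).factorial : ℂ) := by
      have : m - j = (m - (j+1)) + 1 := by omega
      rw [this, Nat.factorial_succ]
      push_cast
      ring
    have h3 : (-(m:ℂ) + j) = -((m - j : ℕ) : ℂ) := by rw [← h1]; ring
    have hne : ((m - j : ℕ) : ℂ) ≠ 0 := by
      have h0 : m - j ≠ 0 := by omega
      exact_mod_cast h0
    calc poch (-(m:ℂ)) j * (-(m:ℂ) + j) * ((m - (j+1)).factorial : ℂ)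
        = -(poch (-(m:ℂ)) j * (((m-j:ℕ):ℂ) * ((m - (j+1)).factorial : ℂ))) := by
          rw [h3]; ring
      _ = -(poch (-(m:ℂ)) j * ((m - j).factorial : ℂ)) := by rw [← h2]
      _ = (-1)^(j+1) * (m.factorial : ℂ) := by rw [ihj]; ring

lemma poch_neg_eq {m j : ℕ} (h : j ≤ m) :
    poch (-(m:ℂ)) j = (-1)^j * (m.factorial : ℂ) / ((m - j).factorial : ℂ) := by
  have hf : ((m - j).factorial : ℂ) ≠ 0 := by exact_mod_cast (m-j).factorial_ne_zero
  field_simp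
  exact poch_neg_mul h

lemma poch_split (z : ℂ) {k n : ℕ} (h : k ≤ n) :
    poch z n = poch z k * poch (z + k) (n - k) := by
  unfold poch
  rw [show n = k + (n - k) from by omega, Finset.prod_range_add,
    show k + (n - k) - k = n - k from by omega]
  congr 1
  apply Finset.prod_congr rfl
  intro i _
  push_cast
  ring

lemma poch_pos_ne_zero (r : ℝ) (hr : 0 < r) (j : ℕ) : poch ((r:ℂ)) j ≠ 0 := by
  apply Finset.prod_ne_zero_iff.mpr
  intro i _
  have : ((r:ℂ) + i) = ((r + i : ℝ) : ℂ) := by push_cast; ring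
  rw [this]
  exact_mod_cast ne_of_gt (by positivity)

lemma one_sub_exp (θ : ℝ) : 1 - Complex.exp (-2*Complex.I*θ)
    = Complex.exp (-(Complex.I*θ)) * (2*Complex.I*(Real.sin θ : ℂ)) := by
  have e1 : Complex.exp (-(Complex.I*θ)) * Complex.exp (-(θ:ℂ)*Complex.I)
      = Complex.exp (-2*Complex.I*θ) := by
    rw [← Complex.exp_add]; ring_nf
  have e2 : Complex.exp (-(Complex.I*θ)) * Complex.exp ((θ:ℂ)*Complex.I) = 1 := by
    rw [← Complex.exp_add, show -(Complex.I*(θ:ℂ)) + θ*Complex.I = 0 from by ring,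
      Complex.exp_zero]
  rw [Complex.ofReal_sin, Complex.sin]
  linear_combination e1 - e2 + (Complex.exp (-(Complex.I*θ)) *
    (Complex.exp ((θ:ℂ)*Complex.I) - Complex.exp (-(θ:ℂ)*Complex.I))) * Complex.I_sq

lemma key_trig (phi psi : ℝ) :
    (Real.sin phi : ℂ) * Complex.exp (Complex.I*psi) + (Real.sin (psi - phi) : ℂ)
      = (Real.sin psi : ℂ) * Complex.exp (Complex.I*phi) := by
  rw [Real.sin_sub, mul_comm Complex.I (psi:ℂ), mul_comm Complex.I (phi:ℂ),
    Complex.exp_mul_I, Complex.exp_mul_I, ← Complex.ofReal_sin, ← Complex.ofReal_cos,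
    ← Complex.ofReal_sin, ← Complex.ofReal_cos]
  push_cast
  ring

lemma exp_pow_identity (θ : ℝ) (m j : ℕ) :
    Complex.exp (Complex.I*m*θ) * (1 - Complex.exp (-2*Complex.I*θ))^j
    = (2*Complex.I*(Real.sin θ:ℂ))^j * Complex.exp (Complex.I*((m:ℂ)-(j:ℂ))*θ) := by
  rw [one_sub_exp, mul_pow, ← Complex.exp_nat_mul]
  have h1 : Complex.exp (Complex.I*m*θ) * Complex.exp ((j:ℂ) * -(Complex.I*θ))
      = Complex.exp (Complex.I*((m:ℂ)-(j:ℂ))*θ) := by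
    rw [← Complex.exp_add]; ring_nf
  linear_combination ((2*Complex.I*(Real.sin θ:ℂ))^j) * h1

/-- The Meixner–Pollaczek polynomial `P_n^{(λ)}(x; φ)` via its terminating
`₂F₁(-n, λ+ix; 2λ; 1-e^{-2iφ})` representation. -/
noncomputable def MP (n : ℕ) (lam : ℝ) (x : ℝ) (phi : ℝ) : ℂ :=
  poch ((2 * lam : ℝ) : ℂ) n / (n.factorial : ℂ) * Complex.exp (Complex.I * n * phi) *
    ∑ k ∈ Finset.range (n + 1),
      poch (-(n : ℂ)) k * poch ((lam : ℂ) + Complex.I * x) k /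
          (poch ((2 * lam : ℝ) : ℂ) k * k.factorial) *
        (1 - Complex.exp (-2 * Complex.I * phi)) ^ k

noncomputable def g (lam x θ : ℝ) (m j : ℕ) : ℂ :=
  poch ((2 * lam : ℝ) : ℂ) m * poch (-(m:ℂ)) j /
      ((m.factorial : ℂ) * poch ((2 * lam : ℝ) : ℂ) j * (j.factorial : ℂ)) *
    ((2*Complex.I*(Real.sin θ:ℂ))^j * Complex.exp (Complex.I*((m:ℂ)-(j:ℂ))*θ))

lemma MP_eq (lam x θ : ℝ) (m N : ℕ) (h : m < N) :
    MP m lam x θ = ∑ j ∈ Finset.range N,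
      g lam x θ m j * poch ((lam : ℂ) + Complex.I * x) j := by
  unfold MP
  rw [Finset.mul_sum]
  rw [Finset.sum_subset (Finset.range_subset_range.mpr h)]
  · apply Finset.sum_congr rfl
    intro j _
    have hid := exp_pow_identity θ m j
    unfold g
    linear_combination (poch ((2*lam:ℝ):ℂ) m * poch (-(m:ℂ)) j *
      poch ((lam:ℂ) + Complex.I * x) j /
      ((m.factorial : ℂ) * poch ((2*lam:ℝ):ℂ) j * (j.factorial : ℂ))) * hid
  · intro j _ hj
    have : poch (-(m:ℂ)) j = 0 := poch_neg_zero (by simp at hj; omega)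
    simp [this]

lemma g_closed (lam x θ : ℝ) {k j : ℕ} (h : j ≤ k)
    (hPj : poch ((2*lam:ℝ):ℂ) j ≠ 0) :
    g lam x θ k j = (-1)^j * poch ((2*lam:ℝ):ℂ) k /
      (((k-j).factorial : ℂ) * poch ((2*lam:ℝ):ℂ) j * (j.factorial : ℂ)) *
      ((2*Complex.I*(Real.sin θ:ℂ))^j * Complex.exp (Complex.I*((k:ℂ)-(j:ℂ))*θ)) := by
  unfold g
  have hf1 : (k.factorial : ℂ) ≠ 0 := by exact_mod_cast k.factorial_ne_zero
  have hf2 : ((k-j).factorial : ℂ) ≠ 0 := by exact_mod_cast (k-j).factorial_ne_zero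
  have hf3 : (j.factorial : ℂ) ≠ 0 := by exact_mod_cast j.factorial_ne_zero
  rw [div_mul_eq_mul_div, div_mul_eq_mul_div,
    div_eq_div_iff (by exact mul_ne_zero (mul_ne_zero hf1 hPj) hf3)
      (by exact mul_ne_zero (mul_ne_zero hf2 hPj) hf3)]
  linear_combination (poch ((2*lam:ℝ):ℂ) k * poch ((2*lam:ℝ):ℂ) j * (j.factorial:ℂ) *
    ((2*Complex.I*(Real.sin θ:ℂ))^j * Complex.exp (Complex.I*((k:ℂ)-(j:ℂ))*θ))) *
    (poch_neg_mul h)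

set_option maxHeartbeats 1000000 in
lemma star (lam : ℝ) (hlam : 0 < lam) (phi psi : ℝ) (hspsi : Real.sin psi ≠ 0)
    (x : ℝ) (n j : ℕ) (hj : j ≤ n) :
    ∑ k ∈ Finset.range (n+1),
      poch ((2 * lam + k : ℝ) : ℂ) (n - k) / ((n - k).factorial : ℂ) *
        (Real.sin phi : ℂ) ^ k * (Real.sin (psi - phi) : ℂ) ^ (n - k) *
        g lam x psi k j
    = (Real.sin psi : ℂ)^n * g lam x phi n j := by
  set N := n - j with hNdef
  have hn : n = j + N := by omega
  have hpoch_j : poch ((2*lam:ℝ):ℂ) j ≠ 0 := poch_pos_ne_zero _ (by linarith) j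
  rw [Finset.range_eq_Ico,
    ← Finset.sum_Ico_consecutive _ (Nat.zero_le j) (show j ≤ n+1 by omega)]
  have h0 : ∑ k ∈ Finset.Ico 0 j,
      (poch ((2 * lam + k : ℝ) : ℂ) (n - k) / ((n - k).factorial : ℂ) *
        (Real.sin phi : ℂ) ^ k * (Real.sin (psi - phi) : ℂ) ^ (n - k) *
        g lam x psi k j) = 0 := by
    apply Finset.sum_eq_zero
    intro k hk
    have hk' : k < j := (Finset.mem_Ico.mp hk).2
    simp [g, poch_neg_zero hk']
  rw [h0, zero_add, Finset.sum_Ico_eq_sum_range,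
    show n + 1 - j = N + 1 from by omega]
  have hsum : ∑ m ∈ Finset.range (N+1),
      (poch ((2 * lam + ((j+m : ℕ) : ℝ) : ℝ) : ℂ) (n - (j+m)) / ((n - (j+m)).factorial : ℂ) *
        (Real.sin phi : ℂ) ^ (j+m) * (Real.sin (psi - phi) : ℂ) ^ (n - (j+m)) *
        g lam x psi (j+m) j)
      = ((-1)^j * poch ((2*lam:ℝ):ℂ) n * (2*Complex.I)^j * (Real.sin phi:ℂ)^j *
          (Real.sin psi:ℂ)^j /
          (poch ((2*lam:ℝ):ℂ) j * (j.factorial:ℂ) * (N.factorial:ℂ))) *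
        ((Real.sin phi:ℂ) * Complex.exp (Complex.I*psi) + (Real.sin (psi-phi):ℂ))^N := by
    rw [add_pow, Finset.mul_sum]
    apply Finset.sum_congr rfl
    intro m hm
    have hmN : m ≤ N := by have := Finset.mem_range.mp hm; omega
    have hnk : n - (j+m) = N - m := by omega
    have hcast : (((2 * lam + ((j+m : ℕ) : ℝ) : ℝ)):ℂ) = ((2*lam:ℝ):ℂ) + (((j+m):ℕ):ℂ) := by
      push_cast; ring
    have psplit : poch ((2*lam:ℝ):ℂ) n
        = poch ((2*lam:ℝ):ℂ) (j+m) * poch (((2*lam:ℝ):ℂ) + (((j+m):ℕ):ℂ)) (N - m) := by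
      rw [poch_split _ (show j+m ≤ n by omega), hnk]
    have hexp : Complex.exp (Complex.I*((((j+m):ℕ):ℂ) - (j:ℂ))*psi)
        = Complex.exp (Complex.I*psi)^m := by
      rw [← Complex.exp_nat_mul]; congr 1; push_cast; ring
    have hchooseM : ((N.choose m):ℂ) * (m.factorial:ℂ) * ((N-m).factorial:ℂ)
        = (N.factorial:ℂ) := by
      exact_mod_cast Nat.choose_mul_factorial_mul_factorial hmN
    have hc0 : ((N.choose m):ℂ) ≠ 0 := by
      exact_mod_cast Nat.ne_of_gt (Nat.choose_pos hmN)
    have hf2 : ((m.factorial:ℂ)) ≠ 0 := by exact_mod_cast m.factorial_ne_zero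
    have hf3 : (((N-m).factorial:ℂ)) ≠ 0 := by exact_mod_cast (N-m).factorial_ne_zero
    have hinv : (((N-m).factorial:ℂ))⁻¹ * ((m.factorial:ℂ))⁻¹
        = ((N.choose m):ℂ) * ((N.factorial:ℂ))⁻¹ := by
      rw [← hchooseM, mul_inv, mul_inv, ← mul_assoc, ← mul_assoc,
        mul_inv_cancel₀ hc0, one_mul, mul_comm]
    rw [g_closed lam x psi (show j ≤ j+m by omega) hpoch_j,
      show j + m - j = m from by omega, hnk, hcast, hexp, psplit]
    linear_combination (poch (((2*lam:ℝ):ℂ) + (((j+m):ℕ):ℂ)) (N-m) *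
      (Real.sin phi:ℂ)^(j+m) * (Real.sin (psi-phi):ℂ)^(N-m) * (-1:ℂ)^j *
      poch ((2*lam:ℝ):ℂ) (j+m) * (poch ((2*lam:ℝ):ℂ) j)⁻¹ * ((j.factorial:ℂ))⁻¹ *
      (2*Complex.I*(Real.sin psi:ℂ))^j * Complex.exp (Complex.I*psi)^m) * hinv
  rw [hsum, key_trig]
  have hexpn : Complex.exp (Complex.I*(((n:ℕ):ℂ) - (j:ℂ))*phi)
      = Complex.exp (Complex.I*phi)^N := by
    rw [← Complex.exp_nat_mul]; congr 1; rw [hn]; push_cast; ring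
  rw [g_closed lam x phi hj hpoch_j, ← hNdef, hexpn, hn, pow_add]
  ring


theorem MP_connection (lam : ℝ) (hlam : 0 < lam) (phi psi : ℝ)
    (hphi : phi ∈ Set.Ioo 0 Real.pi) (hpsi : psi ∈ Set.Ioo 0 Real.pi)
    (x : ℝ) (n : ℕ) :
    MP n lam x phi =
      (1 / ((Real.sin psi : ℂ)) ^ n) *
        ∑ k ∈ Finset.range (n + 1),
          poch ((2 * lam + k : ℝ) : ℂ) (n - k) / ((n - k).factorial : ℂ) *
            (Real.sin phi : ℂ) ^ k * (Real.sin (psi - phi) : ℂ) ^ (n - k) *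
            MP k lam x psi := by
  have hspsi : Real.sin psi ≠ 0 :=
    ne_of_gt (Real.sin_pos_of_pos_of_lt_pi hpsi.1 hpsi.2)
  have hsn : ((Real.sin psi : ℂ))^n ≠ 0 :=
    pow_ne_zero _ (by exact_mod_cast hspsi)
  have h1 : ∑ k ∈ Finset.range (n+1),
        poch ((2 * lam + k : ℝ) : ℂ) (n - k) / ((n - k).factorial : ℂ) *
          (Real.sin phi : ℂ) ^ k * (Real.sin (psi - phi) : ℂ) ^ (n - k) *
          MP k lam x psi
      = ∑ j ∈ Finset.range (n+1),
          (∑ k ∈ Finset.range (n+1),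
            poch ((2 * lam + k : ℝ) : ℂ) (n - k) / ((n - k).factorial : ℂ) *
              (Real.sin phi : ℂ) ^ k * (Real.sin (psi - phi) : ℂ) ^ (n - k) *
              g lam x psi k j) * poch ((lam : ℂ) + Complex.I * x) j := by
    calc ∑ k ∈ Finset.range (n+1),
        poch ((2 * lam + k : ℝ) : ℂ) (n - k) / ((n - k).factorial : ℂ) *
          (Real.sin phi : ℂ) ^ k * (Real.sin (psi - phi) : ℂ) ^ (n - k) *
          MP k lam x psi
        = ∑ k ∈ Finset.range (n+1), ∑ j ∈ Finset.range (n+1),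
            poch ((2 * lam + k : ℝ) : ℂ) (n - k) / ((n - k).factorial : ℂ) *
              (Real.sin phi : ℂ) ^ k * (Real.sin (psi - phi) : ℂ) ^ (n - k) *
              (g lam x psi k j * poch ((lam : ℂ) + Complex.I * x) j) := by
          apply Finset.sum_congr rfl
          intro k hk
          rw [MP_eq lam x psi k (n+1) (Finset.mem_range.mp hk), Finset.mul_sum]
      _ = ∑ j ∈ Finset.range (n+1), ∑ k ∈ Finset.range (n+1),
            poch ((2 * lam + k : ℝ) : ℂ) (n - k) / ((n - k).factorial : ℂ) *
              (Real.sin phi : ℂ) ^ k * (Real.sin (psi - phi) : ℂ) ^ (n - k) *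
              (g lam x psi k j * poch ((lam : ℂ) + Complex.I * x) j) :=
          Finset.sum_comm
      _ = ∑ j ∈ Finset.range (n+1),
          (∑ k ∈ Finset.range (n+1),
            poch ((2 * lam + k : ℝ) : ℂ) (n - k) / ((n - k).factorial : ℂ) *
              (Real.sin phi : ℂ) ^ k * (Real.sin (psi - phi) : ℂ) ^ (n - k) *
              g lam x psi k j) * poch ((lam : ℂ) + Complex.I * x) j := by
          apply Finset.sum_congr rfl
          intro j _
          rw [Finset.sum_mul]
          apply Finset.sum_congr rfl
          intro k _
          ring
  rw [MP_eq lam x phi n (n+1) (Nat.lt_succ_self n), h1, Finset.mul_sum]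
  apply Finset.sum_congr rfl
  intro j hj
  rw [star lam hlam phi psi hspsi x n j
    (Nat.lt_succ_iff.mp (Finset.mem_range.mp hj))]
  rw [one_div, ← mul_assoc, ← mul_assoc, inv_mul_cancel₀ hsn, one_mul]
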